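/- If G is a finite group and H is a normal subgroup of G, then c(G) ≥ c(G/H) + c(H) − 1, where c denotes the number of cyclic subgroups. -/
import Mathlib

lemma zpowers_isCyclic {G : Type*} [Group G] (x : G) :
    IsCyclic (Subgroup.zpowers x) := by
  refine ⟨⟨⟨x, Subgroup.mem_zpowers x⟩, ?_⟩⟩
  rintro ⟨y, n, rfl⟩
  exact ⟨n, by ext; simp⟩

lemma isCyclic_eq_zpowers {G : Type*} [Group G] (K : Subgroup G) (h : IsCyclic K) :
    ∃ x : G, K = Subgroup.zpowers x := by
  obtain ⟨⟨g, hg⟩, hgen⟩ := h.exists_generator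
  refine ⟨g, le_antisymm ?_ ?_⟩
  · intro y hy
    obtain ⟨n, hn⟩ := hgen ⟨y, hy⟩
    exact ⟨n, congrArg Subtype.val hn⟩
  · rintro y ⟨n, rfl⟩
    exact K.zpow_mem hg n

lemma isCyclic_map_subtype {G : Type*} [Group G] (H : Subgroup G) (L : Subgroup H)
    (h : IsCyclic L) : IsCyclic (L.map H.subtype) :=
  isCyclic_of_surjective (L.equivMapOfInjective H.subtype H.subtype_injective).toMonoidHom
    (L.equivMapOfInjective H.subtype H.subtype_injective).surjective

theorem cyclic_count_ge_quotient_add_subgroup (G : Type*) [Group G] [Fintype G]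
    (H : Subgroup G) [H.Normal] :
    Nat.card {K : Subgroup (G ⧸ H) // IsCyclic K} +
      Nat.card {K : Subgroup H // IsCyclic K} - 1 ≤
      Nat.card {K : Subgroup G // IsCyclic K} := by
  classical
  set A := {K : Subgroup (G ⧸ H) // IsCyclic K}
  set B := {K : Subgroup H // IsCyclic K}
  set C := {K : Subgroup G // IsCyclic K}
  -- choose a lift for each cyclic subgroup of the quotient
  have hex : ∀ K : A, ∃ a : G, (K : Subgroup (G ⧸ H)) =
      Subgroup.map (QuotientGroup.mk' H) (Subgroup.zpowers a) := by
    rintro ⟨K, hK⟩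
    obtain ⟨x, rfl⟩ := isCyclic_eq_zpowers K hK
    obtain ⟨a, rfl⟩ := QuotientGroup.mk'_surjective H x
    exact ⟨a, ((QuotientGroup.mk' H).map_zpowers a).symm⟩
  choose lift hlift using hex
  have hliftcyc : ∀ K : A, IsCyclic (Subgroup.zpowers (lift K)) :=
    fun K => zpowers_isCyclic _
  -- the combined injection
  let Φ : A ⊕ B → Option C := fun x =>
    match x with
    | Sum.inl K => if (K : Subgroup (G ⧸ H)) = ⊥ then none
        else some ⟨Subgroup.zpowers (lift K), hliftcyc K⟩
    | Sum.inr L => some ⟨(L : Subgroup H).map H.subtype,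
        isCyclic_map_subtype H L L.2⟩
  have hmapH : ∀ L : B, Subgroup.map (QuotientGroup.mk' H)
      ((L : Subgroup H).map H.subtype) = ⊥ := by
    intro L
    rw [Subgroup.map_eq_bot_iff, QuotientGroup.ker_mk']
    rintro y ⟨⟨z, hz⟩, _, rfl⟩
    exact hz
  have hΦ : Function.Injective Φ := by
    rintro (K1 | L1) (K2 | L2) h
    · by_cases h1 : (K1 : Subgroup (G ⧸ H)) = ⊥ <;>
        by_cases h2 : (K2 : Subgroup (G ⧸ H)) = ⊥ <;>
        simp only [Φ, h1, h2, if_pos, if_neg, if_true, if_false] at h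
      · exact congrArg Sum.inl (Subtype.ext (h1.trans h2.symm))
      · exact absurd h (by simp)
      · exact absurd h (by simp)
      · have := congrArg (fun K : C => Subgroup.map (QuotientGroup.mk' H) K.1)
          (Option.some.inj h)
        simp only at this
        rw [← hlift K1, ← hlift K2] at this
        exact congrArg Sum.inl (Subtype.ext this)
    · by_cases h1 : (K1 : Subgroup (G ⧸ H)) = ⊥ <;>
        simp only [Φ, h1, if_pos, if_neg, if_true, if_false] at h
      · exact absurd h (by simp)
      · have := congrArg (fun K : C => Subgroup.map (QuotientGroup.mk' H) K.1)
          (Option.some.inj h)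
        simp only at this
        rw [← hlift K1, hmapH L2] at this
        exact absurd this h1
    · by_cases h2 : (K2 : Subgroup (G ⧸ H)) = ⊥ <;>
        simp only [Φ, h2, if_pos, if_neg, if_true, if_false] at h
      · exact absurd h (by simp)
      · have := congrArg (fun K : C => Subgroup.map (QuotientGroup.mk' H) K.1)
          (Option.some.inj h)
        simp only at this
        rw [← hlift K2, hmapH L1] at this
        exact absurd this.symm h2
    · have := Option.some.inj h
      have h2 : (L1 : Subgroup H).map H.subtype = (L2 : Subgroup H).map H.subtype :=
        congrArg Subtype.val this
      exact congrArg Sum.inr (Subtype.ext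
        (Subgroup.map_injective H.subtype_injective h2))
  have hfin : Finite (Option C) := by
    have : Finite C := Subtype.finite
    infer_instance
  have hcard : Nat.card (A ⊕ B) ≤ Nat.card (Option C) :=
    Nat.card_le_card_of_injective Φ hΦ
  have hA : Finite A := Subtype.finite
  have hB : Finite B := Subtype.finite
  have hC : Finite C := Subtype.finite
  have hopt : Nat.card (Option C) = Nat.card C + 1 := by
    have := Fintype.ofFinite C
    simp [Nat.card_eq_fintype_card]
  rw [Nat.card_sum, hopt] at hcard
  omega
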